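/- arXiv:2501.10570 — 5 statements merged into one kernel-verified Lean document; each statement's English description precedes it below -/
import Mathlib

section
/- Let a₁,…,aₙ ∈ ℝ^n be linearly independent with 0 < ‖a₁‖ ≤ … ≤ ‖aₙ‖, δ the orthogonality defect, and t > 0. Then the inradius r(t) of the simplex S_A(t) = conv{0, t·a₁, …, t·aₙ} satisfies r(t) ≥ t·‖a₁‖/(n·(n + 2^{n−1})·δ). -/
open MeasureTheory Metric Set
open scoped ENNReal

/-- The line through two points `x` and `y` in Euclidean space. -/
def lineThrough {n : ℕ} (x y : EuclideanSpace ℝ (Fin n)) : Set (EuclideanSpace ℝ (Fin n)) :=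
  {p | ∃ t : ℝ, p = x + t • (y - x)}

/-- `x` illuminates the boundary point `y` of the convex body `K`:
the segment `[x,y]` misses the interior of `K`, but the line through `x,y` meets it. -/
def Illum {n : ℕ} (K : Set (EuclideanSpace ℝ (Fin n))) (x y : EuclideanSpace ℝ (Fin n)) : Prop :=
  segment ℝ x y ∩ interior K = ∅ ∧ (lineThrough x y ∩ interior K).Nonempty

/-- A set `S` illuminates `K` if every boundary point of `K` is illuminated by some point of `S`. -/
def IllumSet {n : ℕ} (S K : Set (EuclideanSpace ℝ (Fin n))) : Prop :=
  ∀ y ∈ frontier K, ∃ x ∈ S, Illum K x y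

/-- `K` has smooth boundary: a unique supporting hyperplane (unit outward normal)
at every boundary point. -/
def SmoothBody {n : ℕ} (K : Set (EuclideanSpace ℝ (Fin n))) : Prop :=
  ∀ y ∈ frontier K, ∃! u : EuclideanSpace ℝ (Fin n),
    ‖u‖ = 1 ∧ ∀ z ∈ K, (inner ℝ u z : ℝ) ≤ inner ℝ u y

/-- The inradius of a set: supremum of radii of closed balls contained in it. -/
noncomputable def inradius {n : ℕ} (P : Set (EuclideanSpace ℝ (Fin n))) : ℝ :=
  sSup {r : ℝ | 0 ≤ r ∧ ∃ c, Metric.closedBall c r ⊆ P}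

/-- The determinant of the matrix whose columns are the vectors `a 0, …, a (n-1)`. -/
noncomputable def detv {n : ℕ} (a : Fin n → EuclideanSpace ℝ (Fin n)) : ℝ :=
  (Matrix.of fun i j => a j i).det

/-!
Write points in coordinates with respect to the basis `a`. By Cramer's rule and Hadamard's
inequality the `i`-th coordinate of `y` is at most
`‖y‖ ∏_{j ≠ i} ‖a j‖ / |det a| ≤ δ ‖y‖ / ‖a₁‖` in absolute value. Around the point all of whose
coordinates equal `t / (2n)`, a ball of radius `ρ` therefore contains only points with
nonnegative coordinates summing to at most `t`, i.e. points of `S_A(t)`, as soon as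
`n δ ρ / ‖a₁‖ ≤ t / 2`; the stated radius satisfies this because `n + 2^(n-1) ≥ 2`.
-/

open Finset Module

section Coordinates

variable {E : Type*} [NormedAddCommGroup E] [InnerProductSpace ℝ E] {n : ℕ}

theorem OrthonormalBasis.abs_det_le_prod_norm (b : OrthonormalBasis (Fin n) ℝ E)
    (v : Fin n → E) : |b.toBasis.det v| ≤ ∏ i, ‖v i‖ := by
  have : Fact (finrank ℝ E = n) := ⟨by simpa using finrank_eq_card_basis b.toBasis⟩
  rw [← b.toBasis.orientation.volumeForm_robust' b v]
  exact Orientation.abs_volumeForm_apply_le _ v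

theorem Module.Basis.det_mul_repr (e B : Basis (Fin n) ℝ E) (y : E) (i : Fin n) :
    e.det B * B.repr y i = e.det (Function.update B i y) := by
  have hmk : Basis.mk B.linearIndependent B.span_eq.ge = B :=
    Basis.eq_of_apply_eq fun _ => by simp
  simpa [hmk] using
    congrArg (· y) (e.det_smul_mk_coord_eq_det_update B.linearIndependent B.span_eq.ge i)

theorem OrthonormalBasis.abs_det_mul_abs_repr_le (b : OrthonormalBasis (Fin n) ℝ E)
    (B : Basis (Fin n) ℝ E) (y : E) (i : Fin n) :
    |b.toBasis.det B| * |B.repr y i| ≤ ‖y‖ * ∏ j ∈ univ.erase i, ‖B j‖ := by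
  rw [← abs_mul, b.toBasis.det_mul_repr]
  calc |b.toBasis.det (Function.update B i y)| ≤ ∏ j, ‖Function.update B i y j‖ :=
        b.abs_det_le_prod_norm _
    _ = ‖y‖ * ∏ j ∈ univ.erase i, ‖B j‖ := by
      rw [prod_congr rfl fun j _ => Function.apply_update (fun _ v => ‖v‖) B i y j,
        prod_update_of_mem (mem_univ i), sdiff_singleton_eq_erase]

theorem OrthonormalBasis.abs_repr_le (b : OrthonormalBasis (Fin n) ℝ E)
    (B : Basis (Fin n) ℝ E) (y : E) (i : Fin n) {α : ℝ} (hα : 0 < α)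
    (hαi : α ≤ ‖B i‖) :
    |B.repr y i| ≤ (∏ j, ‖B j‖) / |b.toBasis.det B| / α * ‖y‖ := by
  have hdet : 0 < |b.toBasis.det B| := abs_pos.mpr (b.toBasis.isUnit_det B).ne_zero
  have hprod : ∏ j, ‖B j‖ = ‖B i‖ * ∏ j ∈ univ.erase i, ‖B j‖ :=
    (mul_prod_erase univ (fun j => ‖B j‖) (mem_univ i)).symm
  rw [hprod, div_div, div_mul_eq_mul_div, le_div_iff₀ (by positivity)]
  calc |B.repr y i| * (|b.toBasis.det B| * α)
      = α * (|b.toBasis.det B| * |B.repr y i|) := by ring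
    _ ≤ ‖B i‖ * (‖y‖ * ∏ j ∈ univ.erase i, ‖B j‖) :=
        mul_le_mul hαi (b.abs_det_mul_abs_repr_le B y i) (by positivity) (norm_nonneg _)
    _ = (‖B i‖ * ∏ j ∈ univ.erase i, ‖B j‖) * ‖y‖ := by ring

end Coordinates

section Simplex

variable {V : Type*} [AddCommGroup V] [Module ℝ V] {ι : Type*} [Fintype ι]

theorem sum_smul_mem_convexHull_insert_zero {w : ι → ℝ} (z : ι → V) (h0 : ∀ i, 0 ≤ w i)
    (h1 : ∑ i, w i ≤ 1) : ∑ i, w i • z i ∈ convexHull ℝ (insert 0 (Set.range z)) := by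
  have := (convex_convexHull ℝ (insert 0 (Set.range z))).sum_mem (t := univ)
    (w := fun o : Option ι => o.elim (1 - ∑ i, w i) w) (z := fun o => o.elim 0 z)
    (by rintro (_ | i) _ <;> simp [h0, h1]) (by simp [Fintype.sum_option])
    (by rintro (_ | i) _ <;> apply subset_convexHull <;> simp)
  simpa [Fintype.sum_option] using this

theorem Module.Basis.mem_convexHull_insert_zero (B : Basis ι ℝ V) {t : ℝ} (ht : 0 < t) {x : V}
    (h0 : ∀ i, 0 ≤ B.repr x i) (h1 : ∑ i, B.repr x i ≤ t) :
    x ∈ convexHull ℝ (insert 0 (Set.range fun i => t • B i)) := by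
  have hx : x = ∑ i, (B.repr x i / t) • (t • B i) := by
    simp_rw [smul_smul, div_mul_cancel₀ _ ht.ne']
    exact (B.sum_repr x).symm
  rw [hx]
  refine sum_smul_mem_convexHull_insert_zero _ (fun i => div_nonneg (h0 i) ht.le) ?_
  rwa [← sum_div, div_le_one ht]

end Simplex

theorem Module.Basis.closedBall_subset_convexHull_insert_zero {E ι : Type*}
    [SeminormedAddCommGroup E] [NormedSpace ℝ E] [Fintype ι] (B : Basis ι ℝ E) {t r ε : ℝ}
    (ht : 0 < t) (hε : ∀ y ∈ closedBall (0 : E) r, ∀ i, |B.repr y i| ≤ ε)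
    (hεt : Fintype.card ι * ε ≤ t / 2) :
    closedBall (∑ i, (t / (2 * Fintype.card ι)) • B i) r ⊆
      convexHull ℝ (insert 0 (Set.range fun i => t • B i)) := by
  intro x hx
  set c := ∑ i, (t / (2 * Fintype.card ι)) • B i
  have hdev : ∀ i, |B.repr (x - c) i| ≤ ε := hε _ (by simpa [dist_eq_norm] using hx)
  have hx_repr (i) : B.repr x i = t / (2 * Fintype.card ι) + B.repr (x - c) i := by
    simp [c]
  refine B.mem_convexHull_insert_zero ht (fun i => ?_) ?_
  · have hcard : (0 : ℝ) < Fintype.card ι := by exact_mod_cast Fintype.card_pos_iff.mpr ⟨i⟩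
    have : ε ≤ t / (2 * Fintype.card ι) := by
      rw [le_div_iff₀ (by positivity)]; linarith
    rw [hx_repr]; linarith [neg_abs_le (B.repr (x - c) i), hdev i]
  · calc ∑ i, B.repr x i ≤ ∑ _i : ι, (t / (2 * Fintype.card ι) + ε) :=
          sum_le_sum fun i _ => by rw [hx_repr]; linarith [le_abs_self (B.repr (x - c) i), hdev i]
      _ ≤ t := by
        have hhalf : (Fintype.card ι : ℝ) * (t / (2 * Fintype.card ι)) ≤ t / 2 :=
          calc (Fintype.card ι : ℝ) * (t / (2 * Fintype.card ι))
              = t / 2 * (Fintype.card ι / Fintype.card ι) := by ring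
            _ ≤ t / 2 := mul_le_of_le_one_right (by positivity) (div_self_le_one _)
        rw [sum_const, card_univ, nsmul_eq_mul, mul_add]
        linarith

theorem le_inradius_of_closedBall_subset {n : ℕ} [NeZero n]
    {P : Set (EuclideanSpace ℝ (Fin n))} (hP : Bornology.IsBounded P)
    {c : EuclideanSpace ℝ (Fin n)} {r : ℝ} (hr : 0 ≤ r) (h : closedBall c r ⊆ P) : r ≤ inradius P := by
  refine le_csSup ⟨diam P / 2, ?_⟩ ⟨hr, c, h⟩
  rintro s ⟨hs, c', hc'⟩
  have := diam_mono hc' hP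
  rw [diam_closedBall_eq c' hs] at this
  linarith

theorem detv_eq_det_basisFun {n : ℕ} (a : Fin n → EuclideanSpace ℝ (Fin n)) :
    detv a = (EuclideanSpace.basisFun (Fin n) ℝ).toBasis.det a := by
  rw [Basis.det_apply]
  rfl

/-- Lower bound for the inradius of the simplex with vertices 0, t·a₁, …, t·aₙ. -/
theorem simplex_inradius_bound {n : ℕ} (hn : 0 < n) (a : Fin n → EuclideanSpace ℝ (Fin n))
    (ha : LinearIndependent ℝ a) (hord : ∀ i j : Fin n, i ≤ j → ‖a i‖ ≤ ‖a j‖)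
    (h0 : 0 < ‖a ⟨0, hn⟩‖) (t : ℝ) (ht : 0 < t) :
    t * ‖a ⟨0, hn⟩‖ / (n * (n + 2 ^ (n - 1)) * ((∏ i, ‖a i‖) / |detv a|))
      ≤ inradius (convexHull ℝ (insert 0 (Set.range fun i => t • a i))) := by
  have : NeZero n := ⟨hn.ne'⟩
  obtain ⟨B, rfl⟩ : ∃ B : Basis (Fin n) ℝ (EuclideanSpace ℝ (Fin n)), ⇑B = a :=
    ⟨_, coe_basisOfLinearIndependentOfCardEqFinrank ha (by simp)⟩
  set e := EuclideanSpace.basisFun (Fin n) ℝ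
  rw [detv_eq_det_basisFun]
  set α := ‖B ⟨0, hn⟩‖
  set δ := (∏ i, ‖B i‖) / |e.toBasis.det B|
  have hδ : 0 < δ :=
    div_pos (prod_pos fun i _ => h0.trans_le (hord _ i (Fin.zero_le i)))
      (abs_pos.mpr (e.toBasis.isUnit_det B).ne_zero)
  have hcoord (y i) : |B.repr y i| ≤ δ / α * ‖y‖ :=
    e.abs_repr_le B y i h0 (hord _ i (Fin.zero_le i))
  have hr : 0 ≤ t * α / (n * (n + 2 ^ (n - 1)) * δ) :=
    div_nonneg (mul_pos ht h0).le (mul_pos (by positivity) hδ).le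
  refine le_inradius_of_closedBall_subset
    (isBounded_convexHull.mpr ((Set.finite_range _).insert 0).isBounded) hr
    (B.closedBall_subset_convexHull_insert_zero (ε := δ / α * _) ht
      (fun y hy i => (hcoord y i).trans
        (mul_le_mul_of_nonneg_left (by simpa using hy) (div_pos hδ h0).le)) ?_)
  have hpow : (1 : ℝ) ≤ 2 ^ (n - 1) := one_le_pow₀ one_le_two
  have hn1 : (1 : ℝ) ≤ n := by exact_mod_cast hn
  have hε : (n : ℝ) * (δ / α * (t * α / (n * (n + 2 ^ (n - 1)) * δ)))
      = t / (n + 2 ^ (n - 1)) := by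
    field_simp
  rw [Fintype.card_fin, hε]
  exact div_le_div_of_nonneg_left ht.le two_pos (by linarith)
end

section
/- Let K ⊂ ℝ^n be a compact convex body with smooth boundary, B a closed ball containing K, and x a point illuminating a boundary point z of B whose outward normal equals the outward normal at some boundary point y of K. Then x also illuminates y. Consequently, any finite set illuminating B illuminates K. -/
open MeasureTheory Metric Set
open scoped ENNReal

/-!
Let `u` be the common outward normal. The line from `x` through `z` can enter the interior of
the ball only beyond `z`, where `⟪u, ·⟫ < ⟪u, z⟫`; hence `⟪u, y⟫ ≤ ⟪u, z⟫ < ⟪u, x⟫`, i.e. `x` lies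
strictly outside the supporting halfspace of `K` at `y`. So the segment `[x, y]` misses the
interior of `K`, and if the line through `x` and `y` missed it too, a hyperplane separating the two
would be a second supporting hyperplane at `y`, passing through `x`, against smoothness. For the
second claim, each boundary point `y` of `K` with normal `u` is matched with `z = c + R • u`.
-/

local notation "⟪" x ", " y "⟫" => inner ℝ x y

section InnerProductSpace

variable {E : Type*} [NormedAddCommGroup E] [InnerProductSpace ℝ E]

theorem inner_lt_of_mem_interior {A : Set E} {u q : E} {m : ℝ} (hu : u ≠ 0)
    (hA : ∀ w ∈ A, ⟪u, w⟫ ≤ m) (hq : q ∈ interior A) : ⟪u, q⟫ < m := by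
  have hopen : IsOpenMap (innerSL ℝ u) :=
    (innerSL ℝ u).isOpenMap_of_ne_zero <| by
      rwa [← norm_ne_zero_iff, innerSL_apply_norm, norm_ne_zero_iff]
  have hmem : ⟪u, q⟫ ∈ interior (Iic m) :=
    interior_mono (image_subset_iff.2 fun w hw => by simpa using hA w hw)
      (hopen.image_interior_subset A ⟨q, hq, rfl⟩)
  rwa [interior_Iic] at hmem

theorem segment_inter_interior_eq_empty_of_inner_le {K : Set E} {u x y : E} (hu : u ≠ 0)
    (huK : ∀ v ∈ K, ⟪u, v⟫ ≤ ⟪u, y⟫) (hxy : ⟪u, y⟫ ≤ ⟪u, x⟫) :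
    segment ℝ x y ∩ interior K = ∅ := by
  have hhalf : Convex ℝ {w | ⟪u, y⟫ ≤ ⟪u, w⟫} :=
    convex_halfSpace_ge (innerₛₗ ℝ u).isLinear _
  have hseg := hhalf.segment_subset hxy (le_refl ⟪u, y⟫)
  refine eq_empty_of_forall_notMem fun q ⟨hqseg, hqK⟩ => ?_
  exact (hseg hqseg).not_gt (inner_lt_of_mem_interior hu huK hqK)

theorem one_lt_of_segment_inter_interior_eq_empty {A : Set E} {x z : E} {t : ℝ}
    (hA : Convex ℝ A) (hz : z ∈ closure A) (hseg : segment ℝ x z ∩ interior A = ∅)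
    (hp : x + t • (z - x) ∈ interior A) : 1 < t := by
  by_contra! ht
  rcases le_or_gt 0 t with ht0 | ht0
  · refine hseg.subset ⟨?_, hp⟩
    rw [segment_eq_image']
    exact ⟨t, ⟨ht0, ht⟩, rfl⟩
  · have h1t : 1 ≤ 1 - t := by linarith
    have hx : z + (1 - t)⁻¹ • ((x + t • (z - x)) - z) = x := by
      rw [show x + t • (z - x) - z = (1 - t) • (x - z) by module, smul_smul,
        inv_mul_cancel₀ (by linarith), one_smul, add_sub_cancel]
    have hxint := hA.add_smul_sub_mem_interior' hz hp
      ⟨inv_pos.2 (by linarith), inv_le_one_of_one_le₀ h1t⟩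
    rw [hx] at hxint
    exact hseg.subset ⟨left_mem_segment ℝ x z, hxint⟩

theorem add_smul_mem_sphere {c u : E} {R : ℝ} (hu : ‖u‖ = 1) (hR : 0 ≤ R) :
    c + R • u ∈ sphere c R := by
  simp [norm_smul, hu, abs_of_nonneg hR]

theorem inner_le_inner_add_smul_of_mem_closedBall {c u w : E} {R : ℝ} (hu : ‖u‖ = 1)
    (hw : w ∈ closedBall c R) : ⟪u, w⟫ ≤ ⟪u, c + R • u⟫ := by
  have hwc : ⟪u, w - c⟫ ≤ R :=
    calc ⟪u, w - c⟫ ≤ ‖u‖ * ‖w - c‖ := real_inner_le_norm u (w - c)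
      _ ≤ R := by rw [hu, one_mul, ← dist_eq_norm]; exact mem_closedBall.1 hw
  rw [inner_sub_right] at hwc
  rw [inner_add_right, real_inner_smul_right, real_inner_self_eq_norm_sq, hu]
  linarith

end InnerProductSpace

section Euclidean

variable {n : ℕ} {K : Set (EuclideanSpace ℝ (Fin n))}

theorem convex_lineThrough (x y : EuclideanSpace ℝ (Fin n)) : Convex ℝ (lineThrough x y) := by
  rintro p ⟨t₁, rfl⟩ q ⟨t₂, rfl⟩ a b _ _ hab
  obtain rfl : b = 1 - a := by linarith
  exact ⟨a * t₁ + (1 - a) * t₂, by module⟩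

theorem eq_of_forall_le_on_lineThrough (f : StrongDual ℝ (EuclideanSpace ℝ (Fin n)))
    {x y : EuclideanSpace ℝ (Fin n)} {σ : ℝ} (hf : ∀ p ∈ lineThrough x y, σ ≤ f p) :
    f x = f y := by
  have hline : ∀ t : ℝ, σ ≤ f x + t * (f y - f x) := fun t => by
    simpa using hf _ ⟨t, rfl⟩
  by_contra hne
  have hd : f y - f x ≠ 0 := sub_ne_zero.2 (Ne.symm hne)
  have := hline ((σ - 1 - f x) / (f y - f x))
  rw [div_mul_cancel₀ _ hd] at this
  linarith

theorem SmoothBody.eq_smul_of_supports (hsm : SmoothBody K) {y u w : EuclideanSpace ℝ (Fin n)}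
    (hy : y ∈ frontier K) (hu : ‖u‖ = 1) (huK : ∀ v ∈ K, ⟪u, v⟫ ≤ ⟪u, y⟫)
    (hw : w ≠ 0) (hwK : ∀ v ∈ K, ⟪w, v⟫ ≤ ⟪w, y⟫) : u = ‖w‖⁻¹ • w := by
  have hnw : 0 < ‖w‖ := norm_pos_iff.2 hw
  obtain ⟨u₀, -, huniq⟩ := hsm y hy
  refine (huniq u ⟨hu, huK⟩).trans (huniq _ ⟨?_, fun v hv => ?_⟩).symm
  · rw [norm_smul, norm_inv, norm_norm, inv_mul_cancel₀ hnw.ne']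
  · rw [real_inner_smul_left, real_inner_smul_left]
    exact mul_le_mul_of_nonneg_left (hwK v hv) (inv_nonneg.2 hnw.le)

theorem inner_eq_of_lineThrough_inter_interior_eq_empty (hconv : Convex ℝ K)
    (hint : (interior K).Nonempty) (hsm : SmoothBody K) {x y u : EuclideanSpace ℝ (Fin n)}
    (hy : y ∈ frontier K) (hu : ‖u‖ = 1) (huK : ∀ v ∈ K, ⟪u, v⟫ ≤ ⟪u, y⟫)
    (hline : lineThrough x y ∩ interior K = ∅) : ⟪u, x⟫ = ⟪u, y⟫ := by
  have hdisj : Disjoint (interior K) (lineThrough x y) := by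
    rw [disjoint_iff_inter_eq_empty, inter_comm, hline]
  obtain ⟨f, σ, hf0, hfK, hfline⟩ := geometric_hahn_banach_of_nonempty_interior hconv
    (convex_lineThrough x y) hdisj hint ⟨x, 0, by simp⟩
  set w := (InnerProductSpace.toDual ℝ _).symm f
  have hwf : ∀ v, ⟪w, v⟫ = f v := fun v => InnerProductSpace.toDual_symm_apply
  have hw : w ≠ 0 := by simpa [w] using hf0
  have hwK : ∀ v ∈ K, ⟪w, v⟫ ≤ ⟪w, y⟫ := fun v hv => by
    rw [hwf, hwf]
    exact (hfK v hv).trans (hfline y ⟨1, by simp⟩)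
  rw [hsm.eq_smul_of_supports hy hu huK hw hwK, real_inner_smul_left, real_inner_smul_left,
    hwf, hwf, eq_of_forall_le_on_lineThrough f hfline]

theorem illum_of_inner_lt (hconv : Convex ℝ K) (hint : (interior K).Nonempty)
    (hsm : SmoothBody K) {x y u : EuclideanSpace ℝ (Fin n)} (hy : y ∈ frontier K)
    (hu : ‖u‖ = 1) (huK : ∀ v ∈ K, ⟪u, v⟫ ≤ ⟪u, y⟫)
    (hxy : ⟪u, y⟫ < ⟪u, x⟫) : Illum K x y := by
  have hu0 : u ≠ 0 := ne_zero_of_norm_ne_zero (hu ▸ one_ne_zero)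
  refine ⟨segment_inter_interior_eq_empty_of_inner_le hu0 huK hxy.le, ?_⟩
  rw [nonempty_iff_ne_empty]
  exact fun hline =>
    hxy.ne' (inner_eq_of_lineThrough_inter_interior_eq_empty hconv hint hsm hy hu huK hline)

theorem inner_lt_inner_of_illum {A : Set (EuclideanSpace ℝ (Fin n))} (hA : Convex ℝ A)
    {x z u : EuclideanSpace ℝ (Fin n)} (hz : z ∈ closure A) (hu : u ≠ 0)
    (huA : ∀ w ∈ A, ⟪u, w⟫ ≤ ⟪u, z⟫) (hx : Illum A x z) :
    ⟪u, z⟫ < ⟪u, x⟫ := by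
  obtain ⟨hseg, _, ⟨t, rfl⟩, hp⟩ := hx
  have ht := one_lt_of_segment_inter_interior_eq_empty hA hz hseg hp
  have hpz := inner_lt_of_mem_interior hu huA hp
  rw [inner_add_right, real_inner_smul_right, inner_sub_right] at hpz
  nlinarith

theorem illum_of_illum_of_subset (hconv : Convex ℝ K) (hint : (interior K).Nonempty)
    (hsm : SmoothBody K) {B : Set (EuclideanSpace ℝ (Fin n))} (hB : Convex ℝ B)
    (hBc : IsClosed B) (hKB : K ⊆ B) {x y z u : EuclideanSpace ℝ (Fin n)}
    (hy : y ∈ frontier K) (hz : z ∈ B) (hu : ‖u‖ = 1)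
    (hyK : ∀ w ∈ K, ⟪u, w⟫ ≤ ⟪u, y⟫) (hzB : ∀ w ∈ B, ⟪u, w⟫ ≤ ⟪u, z⟫)
    (hx : Illum B x z) : Illum K x y := by
  have hu0 : u ≠ 0 := ne_zero_of_norm_ne_zero (hu ▸ one_ne_zero)
  have hyB : y ∈ B := closure_minimal hKB hBc (frontier_subset_closure hy)
  exact illum_of_inner_lt hconv hint hsm hy hu hyK
    ((hzB y hyB).trans_lt (inner_lt_inner_of_illum hB (subset_closure hz) hu0 hzB hx))

theorem illumSet_of_illumSet_closedBall (hconv : Convex ℝ K) (hint : (interior K).Nonempty)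
    (hsm : SmoothBody K) {c : EuclideanSpace ℝ (Fin n)} {R : ℝ} (hR : 0 < R)
    (hKB : K ⊆ closedBall c R) {S : Set (EuclideanSpace ℝ (Fin n))}
    (hS : IllumSet S (closedBall c R)) : IllumSet S K := by
  intro y hy
  obtain ⟨u, ⟨hu, huK⟩, -⟩ := hsm y hy
  have hz : c + R • u ∈ sphere c R := add_smul_mem_sphere hu hR.le
  obtain ⟨x, hxS, hx⟩ := hS _ (by rwa [frontier_closedBall c hR.ne'])
  exact ⟨x, hxS, illum_of_illum_of_subset hconv hint hsm (convex_closedBall c R)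
    isClosed_closedBall hKB hy (sphere_subset_closedBall hz) hu huK
    (fun w hw => inner_le_inner_add_smul_of_mem_closedBall hu hw) hx⟩

end Euclidean

theorem illum_ball_implies_illum_body_general {n : ℕ} (K : Set (EuclideanSpace ℝ (Fin n)))
    (hconv : Convex ℝ K) (hint : (interior K).Nonempty)
    (hsm : SmoothBody K) (c : EuclideanSpace ℝ (Fin n)) (R : ℝ) (hR : 0 < R)
    (hKB : K ⊆ Metric.closedBall c R) (x y z u : EuclideanSpace ℝ (Fin n))
    (hy : y ∈ frontier K) (hz : z ∈ frontier (Metric.closedBall c R)) (hu : ‖u‖ = 1)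
    (hyK : ∀ w ∈ K, (inner ℝ u w : ℝ) ≤ inner ℝ u y)
    (hzB : ∀ w ∈ Metric.closedBall c R, (inner ℝ u w : ℝ) ≤ inner ℝ u z)
    (hx : Illum (Metric.closedBall c R) x z) :
    Illum K x y ∧
      ∀ S : Finset (EuclideanSpace ℝ (Fin n)),
        IllumSet ↑S (Metric.closedBall c R) → IllumSet ↑S K :=
  ⟨illum_of_illum_of_subset hconv hint hsm (convex_closedBall c R) isClosed_closedBall hKB hy
      (isClosed_closedBall.frontier_subset hz) hu hyK hzB hx,
    fun _ => illumSet_of_illumSet_closedBall hconv hint hsm hR hKB⟩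

/-- If x illuminates the boundary point z of a ball B ⊇ K whose outward unit normal agrees
with the outward unit normal at a boundary point y of K, then x illuminates y; consequently,
any finite set illuminating B illuminates K. -/
theorem illum_ball_implies_illum_body {n : ℕ} (K : Set (EuclideanSpace ℝ (Fin n)))
    (hconv : Convex ℝ K) (hcomp : IsCompact K) (hint : (interior K).Nonempty)
    (hsm : SmoothBody K) (c : EuclideanSpace ℝ (Fin n)) (R : ℝ) (hR : 0 < R)
    (hKB : K ⊆ Metric.closedBall c R) (x y z u : EuclideanSpace ℝ (Fin n))
    (hy : y ∈ frontier K) (hz : z ∈ frontier (Metric.closedBall c R)) (hu : ‖u‖ = 1)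
    (hyK : ∀ w ∈ K, (inner ℝ u w : ℝ) ≤ inner ℝ u y)
    (hzB : ∀ w ∈ Metric.closedBall c R, (inner ℝ u w : ℝ) ≤ inner ℝ u z)
    (hx : Illum (Metric.closedBall c R) x z) :
    Illum K x y ∧
      ∀ S : Finset (EuclideanSpace ℝ (Fin n)),
        IllumSet ↑S (Metric.closedBall c R) → IllumSet ↑S K :=
  illum_ball_implies_illum_body_general K hconv hint hsm c R hR hKB x y z u hy hz hu hyK hzB hx
end

section
/- Let P be a compact convex polytope in ℝ^n containing a closed ball B in its interior. Then the set of vertices of P illuminates B. -/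
/-
Let `y` be a boundary point of the ball and `u = y - c` its outward normal. Since `y` lies in the
interior of `P`, the functional `⟪u, ·⟫` takes values on `P` larger than at `y`, and by Krein–Milman
its maximum over the compact set `P` is attained at an extreme point `x`. So `x` lies strictly on
the far side of the tangent hyperplane at `y`: the segment `[x, y]` stays outside the open ball,
while the line through `x` and `y` is not tangent and therefore enters it just beyond `y`.
-/

open MeasureTheory Metric Set
open scoped ENNReal

open Filter Topology
open scoped RealInnerProductSpace

section ExtremePoints

variable {E : Type*} [AddCommGroup E] [Module ℝ E] [TopologicalSpace E] [T2Space E]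
  [IsTopologicalAddGroup E] [ContinuousSMul ℝ E] [LocallyConvexSpace ℝ E] {s : Set E}

theorem IsCompact.exists_mem_extremePoints_isMaxOn (hs : IsCompact s) (hne : s.Nonempty)
    (l : StrongDual ℝ E) : ∃ x ∈ s.extremePoints ℝ, IsMaxOn l s x := by
  obtain ⟨z, hzs, hz⟩ := hs.exists_isMaxOn hne l.continuous.continuousOn
  have hface : IsExposed ℝ s (l.toExposed s) := ContinuousLinearMap.toExposed.isExposed
  obtain ⟨x, hx⟩ := (hface.isCompact hs).extremePoints_nonempty ⟨z, hzs, fun w hw => hz hw⟩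
  exact ⟨x, hface.isExtreme.extremePoints_subset_extremePoints hx,
    fun w hw => (extremePoints_subset hx).2 w hw⟩

theorem IsCompact.exists_mem_extremePoints_lt_of_mem_interior (hs : IsCompact s)
    {l : StrongDual ℝ E} (hl : l ≠ 0) {y : E} (hy : y ∈ interior s) :
    ∃ x ∈ s.extremePoints ℝ, l y < l x := by
  obtain ⟨x, hx, hmax⟩ := hs.exists_mem_extremePoints_isMaxOn ⟨y, interior_subset hy⟩ l
  have himage : ∀ᶠ t in 𝓝 (l y), t ∈ l '' interior s :=
    (l.isOpenMap_of_ne_zero hl _ isOpen_interior).mem_nhds (mem_image_of_mem l hy)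
  obtain ⟨_, hlt, z, hz, rfl⟩ := himage.exists_gt
  exact ⟨x, hx, hlt.trans_le (hmax (interior_subset hz))⟩

end ExtremePoints

section TangentHyperplane

variable {F : Type*} [NormedAddCommGroup F] [InnerProductSpace ℝ F] {c x y : F} {R : ℝ}

theorem norm_add_smul_sub_sq (y c v : F) (t : ℝ) :
    ‖y + t • v - c‖ ^ 2 = ‖y - c‖ ^ 2 + 2 * t * ⟪y - c, v⟫ + t ^ 2 * ‖v‖ ^ 2 := by
  rw [show y + t • v - c = (y - c) + t • v by abel, norm_add_sq_real, real_inner_smul_right,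
    norm_smul, mul_pow, Real.norm_eq_abs, sq_abs]
  ring

theorem segment_inter_ball_eq_empty_of_inner_nonneg (hy : y ∈ sphere c R)
    (h : 0 ≤ ⟪y - c, x - y⟫) : segment ℝ x y ∩ ball c R = ∅ := by
  rw [eq_empty_iff_forall_notMem]
  rintro _ ⟨hseg, hball⟩
  rw [segment_symm, segment_eq_image'] at hseg
  obtain ⟨t, ⟨ht, -⟩, rfl⟩ := hseg
  rw [mem_sphere_iff_norm] at hy
  rw [mem_ball_iff_norm] at hball
  have hsq := norm_add_smul_sub_sq y c (x - y) t
  rw [hy] at hsq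
  nlinarith [norm_nonneg (y + t • (x - y) - c), mul_nonneg ht h]

theorem exists_add_smul_sub_mem_ball_of_inner_pos (hy : y ∈ sphere c R)
    (h : 0 < ⟪y - c, x - y⟫) : ∃ t : ℝ, x + t • (y - x) ∈ ball c R := by
  set β := ⟪y - c, x - y⟫
  have hxy : 0 < ‖y - x‖ := norm_sub_pos_iff.2 fun hyx => by simp [β, hyx] at h
  -- step past `y` by `s = β / ‖y - x‖²`, which minimises the distance to `c` along the line
  set s := β / ‖y - x‖ ^ 2
  refine ⟨1 + s, ?_⟩
  rw [mem_sphere_iff_norm] at hy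
  rw [mem_ball_iff_norm, ← sq_lt_sq₀ (norm_nonneg _) (hy ▸ norm_nonneg _),
    show x + (1 + s) • (y - x) = y + s • (y - x) by module, norm_add_smul_sub_sq,
    show ⟪y - c, y - x⟫ = -β by rw [← inner_neg_right, neg_sub], hy]
  have hs : s * ‖y - x‖ ^ 2 = β := div_mul_cancel₀ β (by positivity)
  nlinarith [div_pos h (pow_pos hxy 2)]

end TangentHyperplane

theorem illum_closedBall_of_inner_pos {n : ℕ} {c x y : EuclideanSpace ℝ (Fin n)} {R : ℝ}
    (hR : R ≠ 0) (hy : y ∈ sphere c R) (h : 0 < ⟪y - c, x - y⟫) :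
    Illum (closedBall c R) x y := by
  rw [Illum, interior_closedBall c hR]
  obtain ⟨t, ht⟩ := exists_add_smul_sub_mem_ball_of_inner_pos hy h
  exact ⟨segment_inter_ball_eq_empty_of_inner_nonneg hy h.le, _, ⟨t, rfl⟩, ht⟩

/-- The vertices of a compact convex polytope containing a ball in its interior
illuminate the ball. -/
theorem polytope_vertices_illuminate_ball {n : ℕ} (V : Finset (EuclideanSpace ℝ (Fin n)))
    (P : Set (EuclideanSpace ℝ (Fin n))) (hP : P = convexHull ℝ ↑V)
    (c : EuclideanSpace ℝ (Fin n)) (R : ℝ) (hR : 0 < R)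
    (hB : Metric.closedBall c R ⊆ interior P) :
    IllumSet (Set.extremePoints ℝ P) (Metric.closedBall c R) := by
  intro y hy
  rw [frontier_closedBall c hR.ne'] at hy
  have hPc : IsCompact P := hP ▸ V.finite_toSet.isCompact_convexHull ℝ
  have hnormal : innerSL ℝ (y - c) ≠ 0 := by
    rw [← norm_ne_zero_iff, innerSL_apply_norm, norm_ne_zero_iff, sub_ne_zero]
    exact ne_of_mem_sphere hy hR.ne'
  obtain ⟨x, hx, hlt⟩ :=
    hPc.exists_mem_extremePoints_lt_of_mem_interior hnormal (hB (sphere_subset_closedBall hy))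
  refine ⟨x, hx, illum_closedBall_of_inner_pos hR.ne' hy ?_⟩
  rw [inner_sub_right]
  exact sub_pos.2 hlt
end

section
/- Let B be a closed ball of radius R in ℝ^n. For every ε > 0 there exists a set S of n+1 points in ℝ^n illuminating B such that max{‖x − y‖ : x ∈ S, y ∈ B} ≤ (n+1)·R + ε. -/
open MeasureTheory Metric Set
open scoped ENNReal

open Module
open scoped RealInnerProductSpace

/-! Put the `n + 1` points at the vertices of a regular simplex centred at `c` with circumradius
`ρ = n R + ε`. Its inradius is `ρ / n > R`, so for every `y` on the sphere `∂B` some vertex `x`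
satisfies `⟪x - c, y - c⟫ > R ^ 2`: it lies strictly beyond the tangent hyperplane at `y`, hence
illuminates `y`. Every vertex is within `ρ + R = (n + 1) R + ε` of every point of `B`.
The regular simplex is realised by the vectors `(n + 1) eᵢ - 𝟙` in the hyperplane `∑ xᵢ = 0`
of `ℝⁿ⁺¹`. -/

theorem exists_sum_sq_le_of_sum_eq_zero {n : ℕ} (a : Fin (n + 1) → ℝ) (ha : ∑ j, a j = 0) :
    ∃ i, 0 ≤ a i ∧ ∑ j, a j ^ 2 ≤ n * (n + 1) * a i ^ 2 := by
  obtain ⟨i, -, hi⟩ := Finset.exists_max_image Finset.univ a Finset.univ_nonempty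
  set M := a i
  have hgap : ∑ j, (M - a j) = (n + 1) * M := by simp [Finset.sum_sub_distrib, ha]
  have hgap_nonneg : ∀ j ∈ Finset.univ, 0 ≤ M - a j := fun j hj => sub_nonneg.2 (hi j hj)
  have hM : 0 ≤ M :=
    nonneg_of_mul_nonneg_right (hgap ▸ Finset.sum_nonneg hgap_nonneg) (by positivity)
  -- each `a j` lies in `[-n M, M]`, so `(M - a j) (a j + n M) ≥ 0`; sum these over `j`
  have hprod : ∀ j ∈ Finset.univ, 0 ≤ (M - a j) * (a j + n * M) := by
    intro j hj
    have := Finset.single_le_sum hgap_nonneg hj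
    rw [hgap] at this
    exact mul_nonneg (hgap_nonneg j hj) (by linarith)
  have hexpand : ∑ j, (M - a j) * (a j + n * M) = n * (n + 1) * M ^ 2 - ∑ j, a j ^ 2 := by
    rw [Finset.sum_congr rfl fun j _ => show (M - a j) * (a j + n * M)
      = (1 - n) * M * a j + n * M ^ 2 - a j ^ 2 by ring]
    rw [Finset.sum_sub_distrib, Finset.sum_add_distrib, ← Finset.mul_sum, ha, Finset.sum_const,
      Finset.card_univ, Fintype.card_fin, nsmul_eq_mul]
    push_cast
    ring
  refine ⟨i, hM, ?_⟩
  linarith [hexpand ▸ Finset.sum_nonneg hprod]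

section RegularSimplex

variable (n : ℕ)

noncomputable def onesVec : EuclideanSpace ℝ (Fin (n + 1)) := WithLp.toLp 2 fun _ => 1

noncomputable def simplexVertex (i : Fin (n + 1)) : EuclideanSpace ℝ (Fin (n + 1)) :=
  (n + 1 : ℝ) • EuclideanSpace.single i 1 - onesVec n

variable {n}

theorem inner_onesVec (a : EuclideanSpace ℝ (Fin (n + 1))) : ⟪onesVec n, a⟫ = ∑ j, a j := by
  simp [onesVec, PiLp.inner_apply]

theorem inner_simplexVertex (i : Fin (n + 1)) (a : EuclideanSpace ℝ (Fin (n + 1))) :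
    ⟪simplexVertex n i, a⟫ = (n + 1) * a i - ∑ j, a j := by
  simp [simplexVertex, inner_sub_left, real_inner_smul_left, EuclideanSpace.inner_single_left,
    inner_onesVec]

theorem simplexVertex_apply (i j : Fin (n + 1)) :
    simplexVertex n i j = if j = i then (n : ℝ) else -1 := by
  by_cases h : j = i <;> simp [simplexVertex, onesVec, h]

theorem sum_simplexVertex (i : Fin (n + 1)) : ∑ j, simplexVertex n i j = 0 := by
  rw [← inner_onesVec, real_inner_comm, inner_simplexVertex]
  simp [onesVec]

theorem simplexVertex_mem_orthogonal (i : Fin (n + 1)) :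
    simplexVertex n i ∈ (ℝ ∙ onesVec n)ᗮ := by
  rw [Submodule.mem_orthogonal_singleton_iff_inner_right, inner_onesVec, sum_simplexVertex]

theorem norm_simplexVertex (i : Fin (n + 1)) :
    ‖simplexVertex n i‖ = √(n * (n + 1)) := by
  rw [norm_eq_sqrt_real_inner, inner_simplexVertex, sum_simplexVertex, simplexVertex_apply, if_pos rfl]
  ring_nf

theorem simplexVertex_injective : Function.Injective (simplexVertex n) := by
  intro i j hij
  by_contra hne
  have := congrArg (· i) hij
  rw [simplexVertex_apply, simplexVertex_apply, if_pos rfl, if_neg hne] at this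
  linarith [n.cast_nonneg (α := ℝ)]

theorem exists_norm_mul_le_inner_simplexVertex (a : EuclideanSpace ℝ (Fin (n + 1)))
    (ha : ∑ j, a j = 0) : ∃ i, ‖a‖ * √(n * (n + 1)) ≤ n * ⟪simplexVertex n i, a⟫ := by
  obtain ⟨i, hai, hle⟩ := exists_sum_sq_le_of_sum_eq_zero (fun j => a j) ha
  refine ⟨i, ?_⟩
  rw [inner_simplexVertex, ha, sub_zero]
  refine le_of_pow_le_pow_left₀ two_ne_zero (mul_nonneg n.cast_nonneg (mul_nonneg (by positivity) hai)) ?_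
  rw [mul_pow, Real.sq_sqrt (by positivity), EuclideanSpace.norm_sq_eq]
  simp only [Real.norm_eq_abs, sq_abs]
  nlinarith [mul_le_mul_of_nonneg_left hle (by positivity : (0 : ℝ) ≤ n * (n + 1))]

end RegularSimplex

/-- The last conjunct says that the simplex with vertices `u i` contains the ball of radius `1 / n`
about its centre `0`. -/
theorem exists_regular_simplex {E : Type*} [NormedAddCommGroup E] [InnerProductSpace ℝ E]
    [FiniteDimensional ℝ E] {n : ℕ} (hE : finrank ℝ E = n) (hn : 0 < n) :
    ∃ u : Fin (n + 1) → E, Function.Injective u ∧ (∀ i, ‖u i‖ = 1) ∧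
      ∀ v, ∃ i, ‖v‖ ≤ n * ⟪u i, v⟫ := by
  have : Fact (finrank ℝ (EuclideanSpace ℝ (Fin (n + 1))) = n + 1) :=
    ⟨finrank_euclideanSpace_fin⟩
  have hones : onesVec n ≠ 0 := fun h => by simpa [onesVec] using congrArg (· 0) h
  let H := (ℝ ∙ onesVec n)ᗮ
  let g : H ≃ₗᵢ[ℝ] E := (OrthonormalBasis.fromOrthogonalSpanSingleton n hones).repr.trans
    ((stdOrthonormalBasis ℝ E).reindex (finCongr hE)).repr.symm
  let w (i : Fin (n + 1)) : H := ⟨simplexVertex n i, simplexVertex_mem_orthogonal i⟩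
  set κ := √(n * (n + 1) : ℝ)
  have hκ : 0 < κ := by positivity
  refine ⟨fun i => κ⁻¹ • g (w i), ?_, ?_, ?_⟩
  · intro i j hij
    exact simplexVertex_injective <| congrArg Subtype.val <| g.injective <|
      smul_right_injective E (inv_ne_zero hκ.ne') hij
  · intro i
    rw [norm_smul, g.norm_map, Submodule.coe_norm, norm_simplexVertex, norm_inv,
      Real.norm_of_nonneg hκ.le, inv_mul_cancel₀ hκ.ne']
  · intro v
    obtain ⟨a, rfl⟩ := g.surjective v
    have ha : ∑ j, (a : EuclideanSpace ℝ (Fin (n + 1))) j = 0 := by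
      rw [← inner_onesVec]
      exact Submodule.mem_orthogonal_singleton_iff_inner_right.1 a.2
    obtain ⟨i, hi⟩ := exists_norm_mul_le_inner_simplexVertex _ ha
    refine ⟨i, ?_⟩
    rw [real_inner_smul_left, g.inner_map_map, g.norm_map, Submodule.coe_norm,
      Submodule.coe_inner, mul_left_comm, ← div_eq_inv_mul, le_div_iff₀ hκ]
    exact hi

section
variable {E : Type*} [NormedAddCommGroup E] [InnerProductSpace ℝ E] {c x y : E} {R : ℝ}

theorem disjoint_segment_ball_of_sq_le_inner (hy : ‖y - c‖ = R) (hx : R ^ 2 ≤ ⟪x - c, y - c⟫) :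
    Disjoint (segment ℝ x y) (ball c R) := by
  rw [Set.disjoint_left]
  rintro _ ⟨s, t, hs, ht, hst, rfl⟩ hz
  rw [mem_ball, dist_eq_norm] at hz
  have hR : 0 < R := (norm_nonneg _).trans_lt hz
  have hzc : s • x + t • y - c = s • (x - c) + t • (y - c) := by
    linear_combination (norm := module) hst • c
  have hlt : ⟪s • x + t • y - c, y - c⟫ < R ^ 2 :=
    (real_inner_le_norm _ _).trans_lt (by rw [hy, sq]; exact mul_lt_mul_of_pos_right hz hR)
  rw [hzc, inner_add_left, real_inner_smul_left, real_inner_smul_left,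
    real_inner_self_eq_norm_sq, hy] at hlt
  nlinarith

theorem exists_mem_ball_of_sq_lt_inner (hy : ‖y - c‖ = R) (hx : R ^ 2 < ⟪x - c, y - c⟫) :
    ∃ t : ℝ, x + t • (y - x) ∈ ball c R := by
  set A := ⟪y - c, x - y⟫ with hA_def
  have hA : 0 < A := by
    rw [hA_def, ← sub_sub_sub_cancel_right x y c, inner_sub_right, real_inner_self_eq_norm_sq,
      hy, real_inner_comm]
    linarith
  have hxy : x - y ≠ 0 := fun h => hA.ne' (by rw [hA_def, h, inner_zero_right])
  set B := ‖x - y‖ ^ 2 with hB_def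
  have hB : 0 < B := by positivity
  -- `y - (A / B) • (x - y)` is the foot of the perpendicular from `c` to the line
  have hfoot : ‖(y - c) - (A / B) • (x - y)‖ ^ 2 = R ^ 2 - A ^ 2 / B := by
    rw [norm_sub_sq_real, real_inner_smul_right, norm_smul, mul_pow, Real.norm_eq_abs, sq_abs, hy,
      ← hA_def, ← hB_def]
    field_simp
    ring
  refine ⟨1 + A / B, ?_⟩
  rw [mem_ball, dist_eq_norm, show x + (1 + A / B) • (y - x) - c = (y - c) - (A / B) • (x - y) by
    module, ← sq_lt_sq₀ (norm_nonneg _) ((norm_nonneg _).trans hy.le), hfoot]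
  have : 0 < A ^ 2 / B := by positivity
  linarith

end

theorem illum_closedBall_of_sq_lt_inner {n : ℕ} {c x y : EuclideanSpace ℝ (Fin n)} {R : ℝ}
    (hy : y ∈ sphere c R) (hx : R ^ 2 < ⟪x - c, y - c⟫) : Illum (closedBall c R) x y := by
  rw [mem_sphere, dist_eq_norm] at hy
  have hR : R ≠ 0 := by
    rintro rfl
    simp [norm_eq_zero.1 hy] at hx
  rw [Illum, interior_closedBall c hR]
  refine ⟨(disjoint_segment_ball_of_sq_le_inner hy hx.le).inter_eq, ?_⟩
  obtain ⟨t, ht⟩ := exists_mem_ball_of_sq_lt_inner hy hx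
  exact ⟨_, ⟨t, rfl⟩, ht⟩

/-- A ball of radius R can be illuminated by n+1 points at distance at most (n+1)R + ε. -/
theorem ball_illumination_distance {n : ℕ} (hn : 0 < n) (c : EuclideanSpace ℝ (Fin n))
    (R : ℝ) (hR : 0 < R) (ε : ℝ) (hε : 0 < ε) :
    ∃ S : Finset (EuclideanSpace ℝ (Fin n)), S.card = n + 1 ∧
      IllumSet ↑S (Metric.closedBall c R) ∧
      ∀ x ∈ S, ∀ y ∈ Metric.closedBall c R, dist x y ≤ (n + 1) * R + ε := by
  obtain ⟨u, hu_inj, hu_norm, hu_cover⟩ := exists_regular_simplex finrank_euclideanSpace_fin hn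
  set ρ : ℝ := n * R + ε
  have hρ : 0 < ρ := by positivity
  refine ⟨Finset.univ.image fun i => c + ρ • u i, ?_, ?_, ?_⟩
  · have h_inj : Function.Injective fun i => c + ρ • u i :=
      fun i j hij => hu_inj <| smul_right_injective _ hρ.ne' <| add_left_cancel hij
    rw [Finset.card_image_of_injective _ h_inj, Finset.card_univ, Fintype.card_fin]
  · intro y hy
    rw [frontier_closedBall c hR.ne'] at hy
    obtain ⟨i, hi⟩ := hu_cover (y - c)
    refine ⟨c + ρ • u i, by simp, illum_closedBall_of_sq_lt_inner hy ?_⟩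
    rw [mem_sphere, dist_eq_norm] at hy
    rw [hy] at hi
    rw [add_sub_cancel_left, real_inner_smul_left]
    -- `n ⟪u i, y - c⟫ ≥ R`, so `ρ ⟪u i, y - c⟫ ≥ (n R + ε) R / n > R ^ 2`
    nlinarith
  · intro x hx y hy
    obtain ⟨i, -, rfl⟩ := Finset.mem_image.1 hx
    calc dist (c + ρ • u i) y ≤ dist (c + ρ • u i) c + dist c y := dist_triangle _ _ _
      _ ≤ ρ + R := by
        rw [dist_self_add_left, norm_smul, hu_norm, Real.norm_of_nonneg hρ.le, mul_one]
        gcongr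
        exact mem_closedBall'.1 hy
      _ = (n + 1) * R + ε := by ring
end

section
/- Every compact set K in ℝ^n with diameter D(K) is contained in a closed ball of radius √(n/(2(n+1)))·D(K) (Jung's inequality). -/
/-!
By Helly's theorem it suffices to treat `n + 1` points at mutual distances at most `D`. Let `c`
minimize the largest distance `r` to these points. Then `c` lies in the convex hull of the set `T`
of points at distance exactly `r`: otherwise moving `c` a little against a functional separating
it from that hull would bring it closer to every point of `T`. Writing `c = ∑ w x • x` with
`x ∈ T`, the parallel axis identity gives `2 r² = ∑ w x ‖x - y‖² ≤ (1 - w y) D²` for each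
`y ∈ T`, and some weight satisfies `w y ≥ 1 / (n + 1)`.
-/

open MeasureTheory Metric Set
open scoped ENNReal

open Filter Finset Topology Module
open scoped RealInnerProductSpace

section PseudoMetric

variable {α : Type*} [PseudoMetricSpace α]

lemma exists_forall_sup'_dist_le [ProperSpace α] {s : Finset α} (hs : s.Nonempty) :
    ∃ c, ∀ c', s.sup' hs (dist c) ≤ s.sup' hs (dist c') := by
  obtain ⟨x₀, hx₀⟩ := hs
  have : Nonempty α := ⟨x₀⟩
  refine Continuous.exists_forall_le (Continuous.finset_sup'_apply _ fun x _ ↦ ?_) ?_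
  · exact continuous_id.dist continuous_const
  · exact tendsto_atTop_mono (fun c ↦ le_sup' (dist c) hx₀)
      (tendsto_dist_right_cocompact_atTop x₀)

lemma sum_mul_dist_sq_le [DecidableEq α] {T : Finset α} {w : α → ℝ} (hw₀ : ∀ x ∈ T, 0 ≤ w x)
    {D : ℝ} (hD : ∀ x ∈ T, ∀ y ∈ T, dist x y ≤ D) {y : α} (hy : y ∈ T) :
    ∑ x ∈ T, w x * dist x y ^ 2 ≤ (∑ x ∈ T, w x - w y) * D ^ 2 := by
  rw [← sum_erase_eq_sub hy, sum_mul, ← sum_erase_add T _ hy, dist_self]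
  simp only [ne_eq, OfNat.ofNat_ne_zero, not_false_eq_true, zero_pow, mul_zero, add_zero]
  refine sum_le_sum fun x hx ↦ mul_le_mul_of_nonneg_left ?_ (hw₀ x (mem_of_mem_erase hx))
  exact pow_le_pow_left₀ dist_nonneg (hD x (mem_of_mem_erase hx) y hy) 2

end PseudoMetric

section InnerProduct

variable {E : Type*} [NormedAddCommGroup E] [InnerProductSpace ℝ E]

lemma sum_mul_norm_sub_sq_eq {T : Finset E} {w : E → ℝ} (hw₁ : ∑ x ∈ T, w x = 1)
    {c : E} (hc : ∑ x ∈ T, w x • x = c) (y : E) :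
    ∑ x ∈ T, w x * ‖x - y‖ ^ 2 = ∑ x ∈ T, w x * ‖x - c‖ ^ 2 + ‖c - y‖ ^ 2 := by
  have hcentred : ∑ x ∈ T, w x • (x - c) = 0 := by
    simp only [smul_sub, sum_sub_distrib, hc, ← sum_smul, hw₁, one_smul, sub_self]
  have hinner : ∑ x ∈ T, w x * ⟪x - c, c - y⟫ = 0 := by
    simp only [← real_inner_smul_left, ← sum_inner, hcentred, inner_zero_left]
  calc ∑ x ∈ T, w x * ‖x - y‖ ^ 2
      = ∑ x ∈ T, (w x * ‖x - c‖ ^ 2 + 2 * (w x * ⟪x - c, c - y⟫) + w x * ‖c - y‖ ^ 2) := by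
        refine sum_congr rfl fun x _ ↦ ?_
        rw [← sub_add_sub_cancel x c y, norm_add_sq_real]
        ring
    _ = ∑ x ∈ T, w x * ‖x - c‖ ^ 2 + ‖c - y‖ ^ 2 := by
        rw [sum_add_distrib, sum_add_distrib, ← mul_sum, hinner, ← sum_mul, hw₁]
        ring

lemma eventually_dist_sub_smul_lt {c x v : E} (h : 0 < ⟪v, c - x⟫) :
    ∀ᶠ t in 𝓝[>] (0 : ℝ), dist (c - t • v) x < dist c x := by
  have hsmall : ∀ᶠ t in 𝓝[>] (0 : ℝ), t * ‖v‖ ^ 2 < 2 * ⟪v, c - x⟫ :=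
    ((continuous_id.mul continuous_const).tendsto' 0 0 (zero_mul _)).eventually_lt_const
      (by positivity) |>.filter_mono nhdsWithin_le_nhds
  filter_upwards [hsmall, self_mem_nhdsWithin] with t ht (ht₀ : 0 < t)
  refine lt_of_pow_lt_pow_left₀ 2 dist_nonneg ?_
  rw [dist_eq_norm, dist_eq_norm, sub_right_comm, norm_sub_sq_real, real_inner_smul_right,
    norm_smul, Real.norm_of_nonneg ht₀.le, real_inner_comm]
  nlinarith

lemma mem_convexHull_farthest_of_forall_sup'_dist_le [CompleteSpace E] {s : Finset E}
    (hs : s.Nonempty) {c : E} (hc : ∀ c', s.sup' hs (dist c) ≤ s.sup' hs (dist c')) :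
    c ∈ convexHull ℝ (↑{x ∈ s | dist c x = s.sup' hs (dist c)} : Set E) := by
  set r := s.sup' hs (dist c)
  set T := {x ∈ s | dist c x = r}
  by_contra hcT
  obtain ⟨g, u, hgT, hgc⟩ := geometric_hahn_banach_closed_point (convex_convexHull ℝ _)
    (T.finite_toSet.isClosed_convexHull (𝕜 := ℝ)) hcT
  set v := (InnerProductSpace.toDual ℝ E).symm g
  have hv : ∀ x ∈ T, 0 < ⟪v, c - x⟫ := fun x hx ↦ by
    rw [inner_sub_right, InnerProductSpace.toDual_symm_apply, InnerProductSpace.toDual_symm_apply]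
    linarith [hgT x (subset_convexHull ℝ _ hx)]
  have hcloser : ∀ᶠ t in 𝓝[>] (0 : ℝ), ∀ x ∈ s, dist (c - t • v) x < r := by
    refine (eventually_all_finset s).2 fun x hx ↦ ?_
    rcases (le_sup' (dist c) hx).lt_or_eq with hlt | heq
    · have hcont : Continuous fun t : ℝ ↦ dist (c - t • v) x := by fun_prop
      exact (hcont.tendsto' 0 _ (by simp)).eventually_lt_const hlt |>.filter_mono
        nhdsWithin_le_nhds
    · exact (eventually_dist_sub_smul_lt (hv x (mem_filter.2 ⟨hx, heq⟩))).mono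
        fun t ht ↦ ht.trans_eq heq
  obtain ⟨t, ht⟩ := hcloser.exists
  exact (hc (c - t • v)).not_gt ((sup'_lt_iff hs).2 ht)

lemma le_sqrt_mul_of_mem_convexHull {T : Finset E} {n : ℕ} (hcard : #T ≤ n + 1) {c : E}
    (hc : c ∈ convexHull ℝ (T : Set E)) {r D : ℝ} (hr : ∀ x ∈ T, dist x c = r)
    (hD : ∀ x ∈ T, ∀ y ∈ T, dist x y ≤ D) :
    r ≤ √(n / (2 * (n + 1))) * D := by
  classical
  obtain ⟨w, hw₀, hw₁, hwc⟩ := mem_convexHull'.1 hc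
  have hT : T.Nonempty := nonempty_of_sum_ne_zero (hw₁ ▸ one_ne_zero)
  have hn : (0 : ℝ) < n + 1 := by positivity
  obtain ⟨y, hy, hwy⟩ : ∃ y ∈ T, 1 / (n + 1 : ℝ) ≤ w y := by
    refine exists_le_of_sum_le hT ?_
    rw [sum_const, hw₁, nsmul_eq_mul, mul_one_div, div_le_one hn]
    exact_mod_cast hcard
  have hD₀ : 0 ≤ D := dist_nonneg.trans (hD y hy y hy)
  have hr_sq : 2 * r ^ 2 ≤ (1 - w y) * D ^ 2 :=
    calc 2 * r ^ 2 = ∑ x ∈ T, w x * dist x y ^ 2 := by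
          simp only [dist_eq_norm] at hr ⊢
          rw [sum_mul_norm_sub_sq_eq hw₁ hwc, sum_congr rfl fun x hx ↦ by rw [hr x hx],
            ← sum_mul, hw₁, norm_sub_rev, hr y hy]
          ring
      _ ≤ (1 - w y) * D ^ 2 := hw₁ ▸ sum_mul_dist_sq_le hw₀ hD hy
  have hwy' : 1 - w y ≤ n / (n + 1) := by
    rw [show (n : ℝ) / (n + 1) = 1 - 1 / (n + 1) by field_simp; ring]
    linarith
  rw [← Real.sqrt_sq hD₀, ← Real.sqrt_mul' _ (sq_nonneg D)]
  refine Real.le_sqrt_of_sq_le ?_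
  rw [show (n : ℝ) / (2 * (n + 1)) * D ^ 2 = n / (n + 1) * D ^ 2 / 2 by field_simp]
  linarith [mul_le_mul_of_nonneg_right hwy' (sq_nonneg D)]

theorem exists_forall_dist_le_sqrt_mul_of_card_le [ProperSpace E] {s : Finset E} {n : ℕ}
    (hcard : #s ≤ n + 1) {D : ℝ} (hD : ∀ x ∈ s, ∀ y ∈ s, dist x y ≤ D) :
    ∃ c, ∀ x ∈ s, dist x c ≤ √(n / (2 * (n + 1))) * D := by
  classical
  rcases s.eq_empty_or_nonempty with rfl | hs
  · exact ⟨0, by simp⟩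
  obtain ⟨c, hc⟩ := exists_forall_sup'_dist_le hs
  refine ⟨c, fun x hx ↦ ?_⟩
  calc dist x c = dist c x := dist_comm ..
    _ ≤ s.sup' hs (dist c) := le_sup' _ hx
    _ ≤ _ := le_sqrt_mul_of_mem_convexHull ((card_filter_le _ _).trans hcard)
      (mem_convexHull_farthest_of_forall_sup'_dist_le hs hc)
      (fun x hx ↦ dist_comm x c ▸ (mem_filter.1 hx).2)
      (fun x hx y hy ↦ hD x (mem_of_mem_filter x hx) y (mem_of_mem_filter y hy))

theorem exists_subset_closedBall_sqrt_finrank_mul_diam [FiniteDimensional ℝ E] {K : Set E}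
    (hK : IsCompact K) :
    ∃ c, K ⊆ closedBall c (√(finrank ℝ E / (2 * (finrank ℝ E + 1))) * diam K) := by
  set ρ := √(finrank ℝ E / (2 * (finrank ℝ E + 1))) * diam K
  have hinter (I : Finset K) (hI : #I ≤ finrank ℝ E + 1) :
      (⋂ i ∈ I, closedBall (i : E) ρ).Nonempty := by
    obtain ⟨c, hc⟩ := exists_forall_dist_le_sqrt_mul_of_card_le
      (s := I.map (Function.Embedding.subtype _)) ((card_map _).trans_le hI)
      (D := diam K) fun x hx y hy ↦ by
        obtain ⟨x, -, rfl⟩ := mem_map.1 hx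
        obtain ⟨y, -, rfl⟩ := mem_map.1 hy
        exact dist_le_diam_of_mem hK.isBounded x.2 y.2
    exact ⟨c, mem_iInter₂.2 fun i hi ↦ mem_closedBall'.2 (hc i (mem_map_of_mem _ hi))⟩
  obtain ⟨c, hc⟩ := Convex.helly_theorem_compact' (𝕜 := ℝ) (F := fun x : K ↦ closedBall (x : E) ρ)
    (fun _ ↦ convex_closedBall _ _) (fun _ ↦ isCompact_closedBall _ _) hinter
  exact ⟨c, fun x hx ↦ mem_closedBall_comm.1 (mem_iInter.1 hc ⟨x, hx⟩)⟩

end InnerProduct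

/-- Jung's inequality: every compact set in ℝⁿ is contained in a closed ball of radius
√(n/(2(n+1))) times its diameter. -/
theorem jung_inequality {n : ℕ} (K : Set (EuclideanSpace ℝ (Fin n))) (hK : IsCompact K) :
    ∃ c : EuclideanSpace ℝ (Fin n),
      K ⊆ Metric.closedBall c (Real.sqrt (n / (2 * (n + 1))) * Metric.diam K) := by
  simpa only [finrank_euclideanSpace_fin] using exists_subset_closedBall_sqrt_finrank_mul_diam hK
end
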